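/- Let {H_i}_{i∈I} be a family of groups. Let CR be the set of all cyclically reduced words over the factors (equivalently, the elements of the free product ∗_{i∈I} H_i whose reduced word is cyclically reduced, including the identity). Let D be the set of finite words (u₁,…,u_n) with letters u_i ∈ CR such that for all 1 ≤ i ≤ j ≤ n the reduced form of the product u_i·u_{i+1}⋯u_j computed in ∗_{i∈I} H_i is cyclically reduced; let Π : D → CR send (u₁,…,u_n) to the reduced form of u₁·u₂⋯u_n; and let inversion send (g₁,…,g_r) to (g_r⁻¹,…,g₁⁻¹). Then (CR, D, Π, (−)⁻¹) satisfies axioms (D1), (D2), (P1), (P2) and (P3), i.e. it is a partial group. -/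

import Mathlib

set_option linter.unusedSectionVars false

open Monoid

namespace PaperPG

/-! ### Generic notions: letters, reduced / cyclically reduced words, reduced forms -/

section Letters

variable {ι : Type*} (H : ι → Type*) [∀ i, Group (H i)]

/-- A letter: a vertex/index together with an element of the corresponding group. -/
abbrev Ltr : Type _ := (i : ι) × H i

/-- A (combinatorially) reduced word: all letters are non-identity and adjacent letters
belong to distinct factors. -/
def IsRed (l : List (Ltr H)) : Prop :=
  (∀ x ∈ l, x.2 ≠ 1) ∧ l.Chain' fun a b => a.1 ≠ b.1

/-- A cyclically reduced word: reduced, and if it has length at least `2`, its first and last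
letters belong to distinct factors. -/
def IsCycRed (l : List (Ltr H)) : Prop :=
  IsRed H l ∧ ∀ a ∈ l.head?, ∀ b ∈ l.getLast?, 2 ≤ l.length → a.1 ≠ b.1

theorem isRed_nil : IsRed H ([] : List (Ltr H)) := by
  constructor <;> simp [List.Chain']

theorem isCycRed_nil : IsCycRed H ([] : List (Ltr H)) := by
  refine ⟨isRed_nil H, ?_⟩
  simp

theorem isCycRed_single (x : Ltr H) (hx : x.2 ≠ 1) : IsCycRed H [x] := by
  refine ⟨⟨by simpa using hx, by simp [List.Chain']⟩, ?_⟩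
  simp

variable [DecidableEq ι] [∀ i, DecidableEq (H i)]

/-- The element of the free product `∗_{i} H i` determined by a word. -/
noncomputable def listProd (l : List (Ltr H)) : CoprodI H :=
  (l.map fun x => CoprodI.of x.2).prod

/-- The reduced form of a word: the unique reduced word representing the product of its
letters in the free product `∗_i H i`. -/
noncomputable def red (l : List (Ltr H)) : List (Ltr H) :=
  (CoprodI.Word.equiv (listProd H l)).toList

/-- The set of indices (vertices) occurring in a word. -/
def verts (l : List (Ltr H)) : Set ι := {i | ∃ x ∈ l, x.1 = i}

/-- The formal inverse of a word: invert every letter and reverse. -/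
def rawInv (l : List (Ltr H)) : List (Ltr H) :=
  (l.map fun x => (⟨x.1, x.2⁻¹⟩ : Ltr H)).reverse

end Letters

/-! ### Homomorphisms of (the underlying data of) partial groups -/

/-- `f` is a homomorphism of partial groups, from the partial group with domain `D₁` and
product `P₁` to the one with domain `D₂` and product `P₂`. -/
def IsHom {M N : Type*} (D₁ : Set (List M)) (P₁ : List M → M)
    (D₂ : Set (List N)) (P₂ : List N → N) (f : M → N) : Prop :=
  (∀ u ∈ D₁, u.map f ∈ D₂) ∧ ∀ u ∈ D₁, P₂ (u.map f) = f (P₁ u)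

theorem isHom_id {M : Type*} (D : Set (List M)) (P : List M → M) : IsHom D P D P id := by
  constructor <;> intro u hu <;> simp [hu]

theorem IsHom.comp {M₁ M₂ M₃ : Type*} {D₁ : Set (List M₁)} {P₁ : List M₁ → M₁}
    {D₂ : Set (List M₂)} {P₂ : List M₂ → M₂} {D₃ : Set (List M₃)} {P₃ : List M₃ → M₃}
    {g : M₂ → M₃} {f : M₁ → M₂} (hg : IsHom D₂ P₂ D₃ P₃ g) (hf : IsHom D₁ P₁ D₂ P₂ f) :
    IsHom D₁ P₁ D₃ P₃ (g ∘ f) := by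
  refine ⟨fun u hu => ?_, fun u hu => ?_⟩
  · rw [← List.map_map]
    exact hg.1 _ (hf.1 u hu)
  · rw [← List.map_map, hg.2 _ (hf.1 u hu), hf.2 u hu]
    rfl

/-! ### The partial group `M(G, H)` associated to a decorated graph -/

section Graph

variable {ι : Type*} (H : ι → Type*) [∀ i, Group (H i)]
  [DecidableEq ι] [∀ i, DecidableEq (H i)] (G : SimpleGraph ι)

/-- Membership in `M(G,H)`: a cyclically reduced word whose set of vertices is a clique. -/
def Mem (l : List (Ltr H)) : Prop := IsCycRed H l ∧ G.IsClique (verts H l)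

theorem mem_nil : Mem H G [] := by
  refine ⟨isCycRed_nil H, ?_⟩
  simp [verts, SimpleGraph.isClique_iff, Set.Pairwise]

theorem mem_single (v : ι) (h : H v) (hne : h ≠ 1) : Mem H G [⟨v, h⟩] := by
  refine ⟨isCycRed_single H _ hne, ?_⟩
  simp only [verts, SimpleGraph.isClique_iff, Set.Pairwise, List.mem_singleton]
  rintro a ⟨x, hx, rfl⟩ b ⟨y, hy, rfl⟩ hne'
  subst hx; subst hy
  exact absurd rfl hne'

/-- A word with letters elements of `M(G,H)` is in the domain `D(G,H)` iff all its letters are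
elements of `M(G,H)`, all occurring vertices lie in a common clique, and the reduced form of
any subproduct `u_i ⋯ u_j` is cyclically reduced. -/
def InD (W : List (List (Ltr H))) : Prop :=
  (∀ u ∈ W, Mem H G u) ∧
  G.IsClique {i | ∃ u ∈ W, i ∈ verts H u} ∧
  ∀ i j : ℕ, i ≤ j → j < W.length →
    IsCycRed H (red H (((W.drop i).take (j + 1 - i)).flatten))

/-- The underlying set of the partial group `M(G,H)`. -/
def Carrier : Type _ := {l : List (Ltr H) // Mem H G l}

/-- The domain of the partial group `M(G,H)`. -/
def pgD : Set (List (Carrier H G)) := {W | InD H G (W.map Subtype.val)}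

/-- The unit of the partial group `M(G,H)`: the empty word. -/
def one : Carrier H G := ⟨[], mem_nil H G⟩

/-- The product map of the partial group `M(G,H)`: the reduced form of the concatenation
(junk value `1` outside of the domain). -/
noncomputable def pgPi (W : List (Carrier H G)) : Carrier H G := by
  classical exact if h : Mem H G (red H (W.map Subtype.val).flatten) then ⟨_, h⟩ else one H G

/-- The inversion of the partial group `M(G,H)` (junk value `1` if the result were not a
member, which never happens). -/
noncomputable def invCar (x : Carrier H G) : Carrier H G := by
  classical exact if h : Mem H G (rawInv H x.val) then ⟨_, h⟩ else one H G

/-- The subset `H̃ᵥ` of `M(G,H)`: the empty word together with the one-letter words with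
letter a nontrivial element of `H v`. -/
def Htilde (v : ι) : Set (Carrier H G) :=
  {x | x.val = [] ∨ ∃ h : H v, h ≠ 1 ∧ x.val = [⟨v, h⟩]}

end Graph

/-! ### Induced maps -/

section Induced

variable {ι ι' : Type*} (H : ι → Type*) [∀ i, Group (H i)]
  [DecidableEq ι] [∀ i, DecidableEq (H i)] (G : SimpleGraph ι)
  (H' : ι' → Type*) [∀ i, Group (H' i)]
  [DecidableEq ι'] [∀ i, DecidableEq (H' i)] (G' : SimpleGraph ι')

/-- The letterwise map on words induced by a map of vertices `fG` and group homomorphisms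
`fH v : H v →* H' (fG v)`. -/
def rawInduced (fG : ι → ι') (fH : ∀ i, H i →* H' (fG i)) (l : List (Ltr H)) :
    List (Ltr H') :=
  l.map fun x => ⟨fG x.1, fH x.1 x.2⟩

/-- The map `M(f_G, {f_v}) : M(G,H) → M(G',H')` (junk value `1` if the image word were not a
member; this never happens when the `fH v` are injective). -/
noncomputable def inducedCar (fG : ι → ι') (fH : ∀ i, H i →* H' (fG i))
    (x : Carrier H G) : Carrier H' G' := by
  classical exact if h : Mem H' G' (rawInduced H H' fG fH x.val) then ⟨_, h⟩ else one H' G'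

/-- A homomorphism of partial groups `M(G,H) → M(G',H')` has torsion-free kernel if the only
element of finite order (as an element of the ambient free product) sent to `1` is `1`. -/
def TFKer (f : Carrier H G → Carrier H' G') : Prop :=
  ∀ x : Carrier H G, f x = one H' G' → IsOfFinOrder (listProd H x.val) → x = one H G

end Induced

/-! ### Automorphism groups -/

section Aut

variable {ι : Type*} (H : ι → Type*) [∀ i, Group (H i)]
  [DecidableEq ι] [∀ i, DecidableEq (H i)] (G : SimpleGraph ι)

/-- The automorphism group of the partial group `M(G,H)`, as a subgroup of the permutation
group of its carrier: bijections that are homomorphisms in both directions. -/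
noncomputable def pgAut : Subgroup (Equiv.Perm (Carrier H G)) where
  carrier := {f | IsHom (pgD H G) (pgPi H G) (pgD H G) (pgPi H G) f ∧
    IsHom (pgD H G) (pgPi H G) (pgD H G) (pgPi H G) f.symm}
  one_mem' := ⟨isHom_id _ _, isHom_id _ _⟩
  mul_mem' := by
    rintro f g ⟨hf, hf'⟩ ⟨hg, hg'⟩
    exact ⟨hf.comp hg, hg'.comp hf'⟩
  inv_mem' := by
    rintro f ⟨hf, hf'⟩
    exact ⟨hf', hf⟩

/-- The automorphism group of a simple graph, as a subgroup of the permutation group of its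
vertices: bijections such that both the map and its inverse send edges to edges. -/
def graphAut : Subgroup (Equiv.Perm ι) where
  carrier := {σ | (∀ a b, G.Adj a b → G.Adj (σ a) (σ b)) ∧
    (∀ a b, G.Adj a b → G.Adj (σ.symm a) (σ.symm b))}
  one_mem' := ⟨fun a b h => h, fun a b h => h⟩
  mul_mem' := by
    rintro f g ⟨hf, hf'⟩ ⟨hg, hg'⟩
    exact ⟨fun a b h => hf _ _ (hg _ _ h), fun a b h => hg' _ _ (hf' _ _ h)⟩
  inv_mem' := by
    rintro f ⟨hf, hf'⟩
    exact ⟨hf', hf⟩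

/-- An automorphism `f` of `M(G,H)` covers the vertex map `σ` if for every vertex `v`,
`f` sends the nontrivial elements of `H̃ᵥ` into `H̃_{σ v}`. -/
def CoversVia (f : Carrier H G → Carrier H G) (σ : ι → ι) : Prop :=
  ∀ (v : ι) (h : H v) (hne : h ≠ 1),
    ∃ h' : H (σ v), h' ≠ 1 ∧ (f ⟨[⟨v, h⟩], mem_single H G v h hne⟩).val = [⟨σ v, h'⟩]

end Aut

/-! ### Subgroups and locally finite subgroups of partial groups -/

/-- A subset `N` is a subgroup of the partial group with data `(D, P, inv)`: it is closed
under inversion, every word with letters in `N` is in the domain `D`, and `P` maps such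
words into `N`. -/
def IsSubgroupOf {M : Type*} (D : Set (List M)) (P : List M → M) (inv : M → M)
    (N : Set M) : Prop :=
  (∀ x ∈ N, inv x ∈ N) ∧ ∀ W : List M, (∀ u ∈ W, u ∈ N) → W ∈ D ∧ P W ∈ N

/-- A subgroup `N` of a partial group is locally finite: every finite subset of `N` is
contained in a finite subgroup contained in `N` (i.e. every finitely generated subgroup of the
group `N` is finite). -/
def IsLocFinSubgroupOf {M : Type*} (D : Set (List M)) (P : List M → M) (inv : M → M)
    (N : Set M) : Prop :=
  IsSubgroupOf D P inv N ∧
    ∀ S : Set M, S ⊆ N → S.Finite →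
      ∃ K : Set M, S ⊆ K ∧ K ⊆ N ∧ IsSubgroupOf D P inv K ∧ K.Finite

end PaperPG

namespace PaperPG

section Free

variable {ι : Type*} (H : ι → Type*) [∀ i, Group (H i)] [DecidableEq ι] [∀ i, DecidableEq (H i)]

/-- The domain for the free-product partial group: words of cyclically reduced words all of
whose subproducts have cyclically reduced reduced form. -/
def InD0 (W : List (List (Ltr H))) : Prop :=
  (∀ u ∈ W, IsCycRed H u) ∧
  ∀ i j : ℕ, i ≤ j → j < W.length →
    IsCycRed H (red H (((W.drop i).take (j + 1 - i)).flatten))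

/-- The set `CR` of cyclically reduced words over the factors `H i`. -/
def Carrier0 : Type _ := {l : List (Ltr H) // IsCycRed H l}

def pgD0 : Set (List (Carrier0 H)) := {W | InD0 H (W.map Subtype.val)}

/-- The product: the reduced form of the concatenation (junk value the empty word outside
the domain). -/
noncomputable def pgPi0 (W : List (Carrier0 H)) : Carrier0 H := by
  classical exact if h : IsCycRed H (red H (W.map Subtype.val).flatten) then ⟨_, h⟩
    else ⟨[], isCycRed_nil H⟩

/-- Inversion: `(g₁,…,g_r) ↦ (g_r⁻¹,…,g₁⁻¹)`. -/
noncomputable def invCar0 (x : Carrier0 H) : Carrier0 H := by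
  classical exact if h : IsCycRed H (rawInv H x.val) then ⟨_, h⟩ else ⟨[], isCycRed_nil H⟩

end Free

section Aux0

variable {ι : Type*} (H : ι → Type*) [∀ i, Group (H i)] [DecidableEq ι] [∀ i, DecidableEq (H i)]

theorem listProd_append0 (l l' : List (Ltr H)) :
    listProd H (l ++ l') = listProd H l * listProd H l' := by
  simp [listProd]

theorem listProd_red0 (l : List (Ltr H)) : listProd H (red H l) = listProd H l := by
  have h := (CoprodI.Word.equiv (M := H)).symm_apply_apply (listProd H l)
  exact h

theorem isRed_red0 (l : List (Ltr H)) : IsRed H (red H l) :=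
  ⟨(CoprodI.Word.equiv (listProd H l)).ne_one, (CoprodI.Word.equiv (listProd H l)).chain_ne⟩

theorem red_of_isRed0 {l : List (Ltr H)} (h : IsRed H l) : red H l = l := by
  have hw : CoprodI.Word.equiv (listProd H l) = ⟨l, h.1, h.2⟩ := by
    have : listProd H l = CoprodI.Word.prod ⟨l, h.1, h.2⟩ := rfl
    rw [this]
    exact (CoprodI.Word.equiv).apply_symm_apply _
  simp only [red, hw]

theorem red_congr0 {l l' : List (Ltr H)} (h : listProd H l = listProd H l') :
    red H l = red H l' := by
  unfold red
  rw [h]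

theorem red_nil0 : red H ([] : List (Ltr H)) = [] :=
  red_of_isRed0 H (isRed_nil H)

theorem rawInv_append0 (l l' : List (Ltr H)) :
    rawInv H (l ++ l') = rawInv H l' ++ rawInv H l := by
  simp [rawInv]

theorem rawInv_rawInv0 (l : List (Ltr H)) : rawInv H (rawInv H l) = l := by
  simp only [rawInv, List.map_reverse, List.reverse_reverse, List.map_map]
  conv_rhs => rw [← List.map_id l]
  exact List.map_congr_left fun x _ => by simp

theorem listProd_rawInv0 (l : List (Ltr H)) :
    listProd H (rawInv H l) = (listProd H l)⁻¹ := by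
  induction l with
  | nil => simp [rawInv, listProd]
  | cons x l ih =>
    have : (x :: l) = [x] ++ l := rfl
    rw [this, rawInv_append0, listProd_append0, ih, listProd_append0, mul_inv_rev]
    congr 1

theorem isRed_rawInv0 {l : List (Ltr H)} (h : IsRed H l) : IsRed H (rawInv H l) := by
  obtain ⟨h1, h2⟩ := h
  constructor
  · intro x hx
    simp only [rawInv, List.mem_reverse, List.mem_map] at hx
    obtain ⟨y, hy, rfl⟩ := hx
    simpa using h1 y hy
  · unfold List.Chain' at h2 ⊢
    rw [rawInv, List.isChain_reverse, List.isChain_map]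
    exact h2.imp fun a b hab => Ne.symm hab

theorem isCycRed_rawInv0 {l : List (Ltr H)} (h : IsCycRed H l) : IsCycRed H (rawInv H l) := by
  refine ⟨isRed_rawInv0 H h.1, ?_⟩
  intro a ha b hb hlen
  rw [rawInv] at ha hb hlen
  rw [List.head?_reverse, List.getLast?_map] at ha
  rw [List.getLast?_reverse, List.head?_map] at hb
  rw [List.length_reverse, List.length_map] at hlen
  rw [Option.mem_def, Option.map_eq_some_iff] at ha hb
  obtain ⟨a', ha', rfl⟩ := ha
  obtain ⟨b', hb', rfl⟩ := hb
  exact fun hh => (h.2 b' hb' a' ha' hlen) hh.symm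

theorem red_rawInv0 (l : List (Ltr H)) : red H (rawInv H l) = rawInv H (red H l) := by
  have h1 : red H (rawInv H l) = red H (rawInv H (red H l)) :=
    red_congr0 H (by rw [listProd_rawInv0, listProd_rawInv0, listProd_red0])
  rw [h1, red_of_isRed0 H (isRed_rawInv0 H (isRed_red0 H l))]

/-- An equivalent formulation of the subproduct condition. -/
def SegOK (W : List (List (Ltr H))) : Prop :=
  ∀ a b c : List (List (Ltr H)), W = a ++ b ++ c → IsCycRed H (red H b.flatten)

theorem redCyc_congr0 {l l' : List (Ltr H)} (h : listProd H l = listProd H l')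
    (hl : IsCycRed H (red H l)) : IsCycRed H (red H l') := by
  rwa [red_congr0 H h] at hl

theorem redCyc_nil0 : IsCycRed H (red H ([] : List (Ltr H))) := by
  rw [red_nil0]; exact isCycRed_nil H

theorem inD0_iff_segOK (W : List (List (Ltr H))) (hW : ∀ u ∈ W, IsCycRed H u) :
    InD0 H W ↔ SegOK H W := by
  constructor
  · rintro ⟨-, h⟩ a b c rfl
    rcases b.eq_nil_or_concat with rfl | ⟨b', x, rfl⟩
    · rw [List.flatten_nil]
      exact redCyc_nil0 H
    · simp only [List.concat_eq_append] at h ⊢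
      have hb : 1 ≤ (b' ++ [x]).length := by simp
      have key := h a.length (a.length + (b' ++ [x]).length - 1)
        (by omega) (by simp only [List.length_append, List.length_cons, List.length_nil]; omega)
      have e1 : (a ++ (b' ++ [x]) ++ c).drop a.length = (b' ++ [x]) ++ c := by
        rw [List.append_assoc, List.drop_left]
      have e2 : a.length + (b' ++ [x]).length - 1 + 1 - a.length = (b' ++ [x]).length := by
        omega
      rw [e1, e2, List.take_left] at key
      exact key
  · intro h
    refine ⟨hW, fun i j hij hj => ?_⟩
    exact h (W.take i) ((W.drop i).take (j + 1 - i)) ((W.drop i).drop (j + 1 - i))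
      (by rw [List.append_assoc, List.take_append_drop, List.take_append_drop])

theorem mem_pgD0_iff (W : List (Carrier0 H)) :
    W ∈ pgD0 H ↔ SegOK H (W.map Subtype.val) := by
  have hW : ∀ u ∈ W.map Subtype.val, IsCycRed H u := by
    intro u hu
    replace hu := List.mem_map.mp hu
    obtain ⟨x, _, rfl⟩ := hu
    exact x.2
  exact inD0_iff_segOK H _ hW

theorem pgPi0_val (W : List (Carrier0 H))
    (h : IsCycRed H (red H (W.map Subtype.val).flatten)) :
    pgPi0 H W = ⟨_, h⟩ :=
  dif_pos h

theorem invCar0_val (x : Carrier0 H) : (invCar0 H x).val = rawInv H x.val := by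
  rw [show invCar0 H x = ⟨_, isCycRed_rawInv0 H x.2⟩ from dif_pos (isCycRed_rawInv0 H x.2)]

theorem segOK_append0 {u v : List (List (Ltr H))} (h : SegOK H (u ++ v)) :
    SegOK H u ∧ SegOK H v := by
  constructor
  · rintro a b c rfl
    exact h a b (c ++ v) (by simp)
  · rintro a b c rfl
    exact h (u ++ a) b c (by simp)

theorem flatten_reverse_map_rawInv (M : List (List (Ltr H))) :
    ((M.map (rawInv H)).reverse).flatten = rawInv H M.flatten := by
  induction M with
  | nil => simp [rawInv]
  | cons l M ih =>
    simp only [List.map_cons, List.reverse_cons, List.flatten_append, ih, List.flatten_cons,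
      List.flatten_nil, List.append_nil, rawInv_append0]

theorem segOK_revInv {M : List (List (Ltr H))} (h : SegOK H M) :
    SegOK H ((M.map (rawInv H)).reverse) := by
  intro a b c habc
  have hM : M = (c.reverse.map (rawInv H)) ++ (b.reverse.map (rawInv H))
      ++ (a.reverse.map (rawInv H)) := by
    have h2 : M.map (rawInv H) = c.reverse ++ b.reverse ++ a.reverse := by
      rw [← List.reverse_reverse (M.map (rawInv H)), habc]
      simp [List.reverse_append]
    have h3 : (M.map (rawInv H)).map (rawInv H) = M := by
      rw [List.map_map]
      conv_rhs => rw [← List.map_id M]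
      exact List.map_congr_left fun x _ => rawInv_rawInv0 H x
    rw [← h3, h2]
    simp
  have key := h _ _ _ hM
  have hb : b.flatten = rawInv H ((b.reverse.map (rawInv H)).flatten) := by
    have : ((b.reverse.map (rawInv H)).map (rawInv H)).reverse = b := by
      rw [List.map_map]
      have : b.reverse.map (rawInv H ∘ rawInv H) = b.reverse := by
        conv_rhs => rw [← List.map_id b.reverse]
        exact List.map_congr_left fun x _ => rawInv_rawInv0 H x
      rw [this, List.reverse_reverse]
    conv_lhs => rw [← this]
    rw [flatten_reverse_map_rawInv]
  rw [hb, red_rawInv0]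
  exact isCycRed_rawInv0 H key

theorem listProd_flatten_append0 (x y : List (List (Ltr H))) :
    listProd H (x ++ y).flatten = listProd H x.flatten * listProd H y.flatten := by
  rw [List.flatten_append, listProd_append0]

theorem flatten_single0 (p : List (Ltr H)) : ([p] : List (List (Ltr H))).flatten = p := by
  simp

theorem redCyc_of_segOK {M : List (List (Ltr H))} (h : SegOK H M) :
    IsCycRed H (red H M.flatten) :=
  h [] M [] (by simp)

theorem segOK_single0 {l : List (Ltr H)} (h : IsCycRed H l) : SegOK H [l] := by
  rintro a b c habc
  have hsub : b = [] ∨ b = [l] :=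
    List.sublist_singleton.mp (List.IsInfix.sublist ⟨a, c, habc.symm⟩)
  rcases hsub with rfl | rfl
  · rw [List.flatten_nil]
    exact redCyc_nil0 H
  · rw [flatten_single0, red_of_isRed0 H h.1]
    exact h

/-- Key combinatorial lemma for (P2). -/
theorem segOK_middle {U V W : List (List (Ltr H))} {p : List (Ltr H)}
    (h : SegOK H (U ++ V ++ W)) (hp : listProd H p = listProd H V.flatten) :
    SegOK H (U ++ [p] ++ W) := by
  intro a b c habc
  rw [List.append_assoc] at habc
  replace habc : a ++ (b ++ c) = U ++ ([p] ++ W) := by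
    rw [← List.append_assoc, ← habc]
  rcases List.append_eq_append_iff.mp habc with ⟨a', hU, hbc⟩ | ⟨c', ha, hw⟩
  · rcases List.append_eq_append_iff.mp hbc with ⟨b', ha', hc⟩ | ⟨k, hb, hk⟩
    · -- b inside U
      exact h a b (b' ++ V ++ W) (by rw [hU, ha']; simp)
    · -- hk : [p] ++ W = k ++ c
      rcases k with _ | ⟨q, k₂⟩
      · -- k = [], b = a', U = a ++ b
        simp only [List.append_nil] at hb
        exact h a b (V ++ W) (by rw [hU, hb]; simp)
      · -- q = p, W = k₂ ++ c, b = a' ++ p :: k₂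
        have hq : p = q ∧ W = k₂ ++ c := by
          have := hk
          simp only [List.singleton_append, List.cons_append, List.cons.injEq] at this
          exact ⟨this.1, this.2⟩
        obtain ⟨rfl, hW⟩ := hq
        have hkey := h a (a' ++ V ++ k₂) c (by rw [hU, hW]; simp)
        apply redCyc_congr0 H _ hkey
        rw [hb]
        have e1 : (a' ++ V ++ k₂).flatten = a'.flatten ++ V.flatten ++ k₂.flatten := by
          simp [List.flatten_append]
        have e2 : (a' ++ p :: k₂).flatten = a'.flatten ++ p ++ k₂.flatten := by
          simp [List.flatten_append]
        rw [e1, e2, listProd_append0, listProd_append0, listProd_append0, listProd_append0, hp]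
  · -- hw : [p] ++ W = c' ++ (b ++ c)
    rcases c' with _ | ⟨q, c₂⟩
    · -- a = U, b ++ c = p :: W
      simp only [List.append_nil] at ha
      simp only [List.nil_append] at hw
      rcases b with _ | ⟨r, b₂⟩
      · rw [List.flatten_nil]
        exact redCyc_nil0 H
      · have hr : p = r ∧ W = b₂ ++ c := by
          have := hw
          simp only [List.singleton_append, List.cons_append, List.cons.injEq] at this
          exact ⟨this.1, this.2⟩
        obtain ⟨rfl, hW⟩ := hr
        have hkey := h U (V ++ b₂) c (by rw [hW]; simp)
        apply redCyc_congr0 H _ hkey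
        have e1 : (V ++ b₂).flatten = V.flatten ++ b₂.flatten := by simp [List.flatten_append]
        have e2 : (p :: b₂).flatten = p ++ b₂.flatten := by simp
        rw [e1, e2, listProd_append0, listProd_append0, hp]
    · -- q = p, W = c₂ ++ b ++ c
      have hq : p = q ∧ W = c₂ ++ (b ++ c) := by
        have := hw
        simp only [List.singleton_append, List.cons_append, List.cons.injEq] at this
        exact ⟨this.1, this.2⟩
      obtain ⟨rfl, hW⟩ := hq
      exact h (U ++ V ++ c₂) b c (by rw [hW]; simp)

/-- Key combinatorial lemma for (P3). -/
theorem segOK_invcat {M : List (List (Ltr H))} (h : SegOK H M) :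
    SegOK H ((M.map (rawInv H)).reverse ++ M) := by
  intro a b c habc
  replace habc : a ++ (b ++ c) = (M.map (rawInv H)).reverse ++ M := by
    rw [← List.append_assoc, ← habc]
  rcases List.append_eq_append_iff.mp habc with ⟨a', hN, hbc⟩ | ⟨c', ha, hM⟩
  · rcases List.append_eq_append_iff.mp hbc with ⟨b', ha', hc⟩ | ⟨k, hb, hMk⟩
    · -- b inside the inverted part
      exact segOK_revInv H h a b b' (by rw [hN, ha']; simp)
    · -- spanning case: b = a' ++ k, N = a ++ a', M = k ++ c
      -- a' is a suffix of the inverted part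
      have hrev : M.map (rawInv H) = a'.reverse ++ a.reverse := by
        rw [← List.reverse_reverse (M.map (rawInv H)), hN]
        simp [List.reverse_append]
      set s := M.take a'.length with hs
      have hsmap : s.map (rawInv H) = a'.reverse := by
        rw [hs, List.map_take, hrev]
        exact List.take_left' (by simp)
      have ha' : a' = (s.map (rawInv H)).reverse := by rw [hsmap, List.reverse_reverse]
      have haflat : a'.flatten = rawInv H s.flatten := by
        rw [ha', flatten_reverse_map_rawInv]
      have hsp : s <+: M := List.take_prefix _ _
      have hkp : k <+: M := ⟨c, hMk.symm⟩
      have hbP : listProd H b.flatten =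
          (listProd H s.flatten)⁻¹ * listProd H k.flatten := by
        rw [hb, List.flatten_append, listProd_append0, haflat, listProd_rawInv0]
      rcases List.prefix_or_prefix_of_prefix hsp hkp with ⟨m, hm⟩ | ⟨m, hm⟩
      · -- k = s ++ m
        have hkey := h s m c (by rw [← hm] at hMk; exact hMk)
        apply redCyc_congr0 H _ hkey
        rw [hbP, ← hm, List.flatten_append, listProd_append0]
        group
      · -- s = k ++ m
        obtain ⟨t, ht⟩ := hsp
        have hkey := h k m t (by rw [← ht, ← hm])
        have hkey2 : IsCycRed H (red H (rawInv H m.flatten)) := by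
          rw [red_rawInv0]
          exact isCycRed_rawInv0 H hkey
        apply redCyc_congr0 H _ hkey2
        rw [hbP, ← hm, List.flatten_append, listProd_append0, listProd_rawInv0]
        group
  · -- b inside M
    rw [← List.append_assoc] at hM
    exact h c' b c hM

end Aux0

/-- `(CR, D, Π, (−)⁻¹)` is a partial group: inversion is a well-defined
involution on `CR`, `Π` is given on `D` by the reduced form of the concatenation, and the
axioms (D1), (D2), (P1), (P2) and (P3) hold. -/
theorem statement0 {ι : Type*} (H : ι → Type*) [∀ i, Group (H i)]
    [DecidableEq ι] [∀ i, DecidableEq (H i)] :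
    -- inversion is well defined on `CR` and is an involution
    (∀ x : Carrier0 H, (invCar0 H x).val = rawInv H x.val ∧ invCar0 H (invCar0 H x) = x) ∧
    -- the product of a word of the domain is its reduced form, an element of `CR`
    (∀ W ∈ pgD0 H, (pgPi0 H W).val = red H (W.map Subtype.val).flatten) ∧
    -- (D1)
    (∀ x : Carrier0 H, [x] ∈ pgD0 H) ∧
    -- (D2)
    (∀ u v : List (Carrier0 H), u ++ v ∈ pgD0 H → u ∈ pgD0 H ∧ v ∈ pgD0 H) ∧
    -- (P1)
    (∀ x : Carrier0 H, pgPi0 H [x] = x) ∧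
    -- (P2)
    (∀ u v w : List (Carrier0 H), u ++ v ++ w ∈ pgD0 H →
      u ++ [pgPi0 H v] ++ w ∈ pgD0 H ∧
        pgPi0 H (u ++ v ++ w) = pgPi0 H (u ++ [pgPi0 H v] ++ w)) ∧
    -- (P3)
    (∀ u ∈ pgD0 H, (u.map (invCar0 H)).reverse ++ u ∈ pgD0 H ∧
      pgPi0 H ((u.map (invCar0 H)).reverse ++ u) = pgPi0 H []) := by
  refine ⟨?_, ?_, ?_, ?_, ?_, ?_, ?_⟩
  · -- inversion
    intro x
    refine ⟨invCar0_val H x, ?_⟩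
    apply Subtype.ext
    rw [invCar0_val, invCar0_val, rawInv_rawInv0]
  · -- product on the domain
    intro W hW
    rw [pgPi0_val H W (redCyc_of_segOK H ((mem_pgD0_iff H W).mp hW))]
  · -- (D1)
    intro x
    rw [mem_pgD0_iff]
    have : ([x] : List (Carrier0 H)).map Subtype.val = [x.val] := rfl
    rw [this]
    exact segOK_single0 H x.2
  · -- (D2)
    intro u v h
    rw [mem_pgD0_iff] at h
    have e : (u ++ v).map Subtype.val = u.map Subtype.val ++ v.map Subtype.val := List.map_append
    rw [e] at h
    obtain ⟨h1, h2⟩ := segOK_append0 H h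
    exact ⟨(mem_pgD0_iff H u).mpr h1, (mem_pgD0_iff H v).mpr h2⟩
  · -- (P1)
    intro x
    have hflat : (([x] : List (Carrier0 H)).map Subtype.val).flatten = x.val := by
      show [x.val].flatten = x.val; simp
    have h : IsCycRed H (red H (([x] : List (Carrier0 H)).map Subtype.val).flatten) := by
      rw [hflat, red_of_isRed0 H x.2.1]
      exact x.2
    rw [pgPi0_val H [x] h]
    apply Subtype.ext
    show red H (([x] : List (Carrier0 H)).map Subtype.val).flatten = x.val
    rw [hflat, red_of_isRed0 H x.2.1]
  · -- (P2)
    intro u v w h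
    have hmap1 : (u ++ v ++ w).map Subtype.val
        = u.map Subtype.val ++ v.map Subtype.val ++ w.map Subtype.val := by
      rw [show (u ++ v ++ w).map Subtype.val = (u ++ v).map Subtype.val ++ w.map Subtype.val
          from List.map_append,
        show (u ++ v).map Subtype.val = u.map Subtype.val ++ v.map Subtype.val from List.map_append]
    have hseg : SegOK H (u.map Subtype.val ++ v.map Subtype.val ++ w.map Subtype.val) := by
      rw [← hmap1]
      exact (mem_pgD0_iff H _).mp h
    have hv : v ∈ pgD0 H :=
      (mem_pgD0_iff H v).mpr ((segOK_append0 H (segOK_append0 H hseg).1).2)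
    have hvval : (pgPi0 H v).val = red H (v.map Subtype.val).flatten :=
      pgPi0_val H v (redCyc_of_segOK H ((mem_pgD0_iff H v).mp hv)) ▸ rfl
    have hP : listProd H (pgPi0 H v).val = listProd H (v.map Subtype.val).flatten := by
      rw [hvval, listProd_red0]
    have hdom : SegOK H (u.map Subtype.val ++ [(pgPi0 H v).val] ++ w.map Subtype.val) :=
      segOK_middle H hseg hP
    have hmap2 : (u ++ [pgPi0 H v] ++ w).map Subtype.val
        = u.map Subtype.val ++ [(pgPi0 H v).val] ++ w.map Subtype.val := by
      rw [show (u ++ [pgPi0 H v] ++ w).map Subtype.val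
          = (u ++ [pgPi0 H v]).map Subtype.val ++ w.map Subtype.val from List.map_append,
        show (u ++ [pgPi0 H v]).map Subtype.val
          = u.map Subtype.val ++ [pgPi0 H v].map Subtype.val from List.map_append]
      rfl
    have hmem2 : u ++ [pgPi0 H v] ++ w ∈ pgD0 H := by
      rw [mem_pgD0_iff, hmap2]
      exact hdom
    refine ⟨hmem2, ?_⟩
    have hA : IsCycRed H (red H ((u ++ v ++ w).map Subtype.val).flatten) :=
      redCyc_of_segOK H ((mem_pgD0_iff H _).mp h)
    have hB : IsCycRed H (red H ((u ++ [pgPi0 H v] ++ w).map Subtype.val).flatten) :=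
      redCyc_of_segOK H ((mem_pgD0_iff H _).mp hmem2)
    rw [pgPi0_val H _ hA, pgPi0_val H _ hB]
    apply Subtype.ext
    apply red_congr0
    rw [hmap1, hmap2]
    rw [List.flatten_append, List.flatten_append, List.flatten_append, List.flatten_append,
      listProd_append0, listProd_append0, listProd_append0, listProd_append0,
      flatten_single0, hP]
  · -- (P3)
    intro u hu
    have hM : SegOK H (u.map Subtype.val) := (mem_pgD0_iff H u).mp hu
    have hmap : ((u.map (invCar0 H)).reverse ++ u).map Subtype.val
        = ((u.map Subtype.val).map (rawInv H)).reverse ++ u.map Subtype.val := by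
      rw [show ((u.map (invCar0 H)).reverse ++ u).map Subtype.val
          = ((u.map (invCar0 H)).reverse).map Subtype.val ++ u.map Subtype.val from List.map_append,
        show ((u.map (invCar0 H)).reverse).map Subtype.val
          = ((u.map (invCar0 H)).map Subtype.val).reverse from List.map_reverse,
        show (u.map (invCar0 H)).map Subtype.val = u.map (Subtype.val ∘ invCar0 H) from List.map_map,
        show (u.map Subtype.val).map (rawInv H) = u.map (rawInv H ∘ Subtype.val) from List.map_map]
      congr 2
      exact List.map_congr_left fun x _ => invCar0_val H x
    have hdom := segOK_invcat H hM
    have hmem : (u.map (invCar0 H)).reverse ++ u ∈ pgD0 H := by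
      rw [mem_pgD0_iff, hmap]
      exact hdom
    refine ⟨hmem, ?_⟩
    have hA : IsCycRed H (red H (((u.map (invCar0 H)).reverse ++ u).map Subtype.val).flatten) :=
      redCyc_of_segOK H ((mem_pgD0_iff H _).mp hmem)
    have hB : IsCycRed H
        (red H (([] : List (Carrier0 H)).map Subtype.val).flatten) := by
      exact redCyc_nil0 H
    rw [pgPi0_val H _ hA, pgPi0_val H _ hB]
    apply Subtype.ext
    apply red_congr0
    rw [hmap, List.flatten_append, listProd_append0, flatten_reverse_map_rawInv,
      listProd_rawInv0, inv_mul_cancel]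
    rfl

end PaperPG
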